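/- arXiv:1607.01764 — 2 statements merged into one kernel-verified Lean document; each statement's English description precedes it below -/
import Mathlib

section
/- (Tunnelling criterion for wave packets in a rectangular barrier.) Let V₀ > 0 and 0 ≤ a ≤ 1, let P_en : [0,∞) → ℝ be nonincreasing with P_en(0) = 1, 0 ≤ P_en(E*) ≤ 1 for all E* ≥ 0, and suppose P_en is left-continuous at V₀ (i.e. P_en(E*) → P_en(V₀) as E* → V₀ from below). Define P_pos on [0,∞) by P_pos(0) = 1, P_pos(E*) = a for 0 < E* < V₀, and P_pos(E*) = 0 for E* ≥ V₀. Then (∃ E* ≥ 0 with P_pos(E*) > P_en(E*)) if and only if P_en(V₀) < a. -/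
open Filter Topology

/-- Tunnelling criterion for wave packets in a rectangular barrier:
with `P_en` a nonincreasing cumulative energy probability on `[0,∞)` with `P_en 0 = 1`,
values in `[0,1]`, left-continuous at `V₀`, and `P_pos` the piecewise cumulative
position probability, the state is tunnelling iff `P_en V₀ < a`. -/
theorem wave_packet_tunnelling_iff
    (V₀ a : ℝ) (hV₀ : 0 < V₀) (ha₀ : 0 ≤ a) (ha₁ : a ≤ 1)
    (Pen : ℝ → ℝ)
    (hmono : ∀ E₁ E₂ : ℝ, 0 ≤ E₁ → E₁ ≤ E₂ → Pen E₂ ≤ Pen E₁)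
    (hen0 : Pen 0 = 1)
    (hbdd : ∀ Estar : ℝ, 0 ≤ Estar → 0 ≤ Pen Estar ∧ Pen Estar ≤ 1)
    (hcont : Tendsto Pen (nhdsWithin V₀ (Set.Iio V₀)) (nhds (Pen V₀)))
    (Ppos : ℝ → ℝ)
    (hpos0 : Ppos 0 = 1)
    (hposmid : ∀ Estar : ℝ, 0 < Estar → Estar < V₀ → Ppos Estar = a)
    (hpostop : ∀ Estar : ℝ, V₀ ≤ Estar → Ppos Estar = 0) :
    (∃ Estar : ℝ, 0 ≤ Estar ∧ Ppos Estar > Pen Estar) ↔ Pen V₀ < a := by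
  constructor
  · rintro ⟨E, hE0, hgt⟩
    rcases lt_or_ge E V₀ with hlt | hge
    · rcases eq_or_lt_of_le hE0 with rfl | hpos
      · rw [hpos0, hen0] at hgt; exact absurd hgt (lt_irrefl 1)
      · rw [hposmid E hpos hlt] at hgt
        exact lt_of_le_of_lt (hmono E V₀ hE0 hlt.le) hgt
    · rw [hpostop E hge] at hgt
      exact absurd hgt (not_lt.mpr (hbdd E hE0).1)
  · intro h
    have hne : (nhdsWithin V₀ (Set.Iio V₀)).NeBot := by
      exact nhdsLT_neBot V₀
    have h1 : ∀ᶠ E in nhdsWithin V₀ (Set.Iio V₀), Pen E < a :=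
      hcont.eventually (eventually_lt_nhds h)
    have h2 : ∀ᶠ E in nhdsWithin V₀ (Set.Iio V₀), E ∈ Set.Ioo 0 V₀ := by
      have : Set.Ioo 0 V₀ ∈ nhdsWithin V₀ (Set.Iio V₀) := by
        rw [mem_nhdsWithin]
        exact ⟨Set.Ioi 0, isOpen_Ioi, hV₀, fun x hx => ⟨hx.1, hx.2⟩⟩
      exact this
    obtain ⟨E, hEa, hE0, hEV⟩ := (h1.and h2).exists
    exact ⟨E, hE0.le, by rw [hposmid E hE0 hEV]; exact hEa⟩
end

section
/- (The ground state of the quantum harmonic oscillator is tunnelling.) Let m, ω, ħ > 0, let W₀(x,p) = (1/(πħ)) exp(−mωx²/ħ) exp(−p²/(mωħ)), let 𝓔x(x,p) = 1 if |x| > √(ħ/(mω)) and 0 otherwise, and let 𝓔E(x,p) = 1 − 2πħ W₀(x,p). Then ∬ℝ² (𝓔x(x,p) − 𝓔E(x,p)) · W₀(x,p) dx dp > 0; equivalently, ∬ (𝓔E − 𝓔x) W₀ dx dp < 0, so the ground state of the quantum harmonic oscillator satisfies the phase-space tunnelling condition at E* = ħω/2. -/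
open MeasureTheory

lemma tunnel_prod_integrable {f g : ℝ → ℝ} (hf : Integrable f) (hg : Integrable g) (C : ℝ) :
    Integrable (fun z : ℝ × ℝ => C * (f z.1 * g z.2)) := by
  have := (hf.mul_prod hg)
  rw [← Measure.volume_eq_prod] at this
  exact this.const_mul C

lemma tunnel_prod_integral (f g : ℝ → ℝ) (C : ℝ) :
    (∫ z : ℝ × ℝ, C * (f z.1 * g z.2)) = C * ((∫ x, f x) * ∫ p, g p) := by
  rw [MeasureTheory.integral_const_mul, Measure.volume_eq_prod,
    MeasureTheory.integral_prod_mul]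

/-- The ground state of the quantum harmonic oscillator is tunnelling:
with `W₀` the ground-state Wigner function, `𝓔x` the indicator of the classically
forbidden region `{|x| > √(ħ/(mω))}` and `𝓔E = 1 − 2πħ W₀` the effect for
`P(E > ħω/2)`, the phase-space tunnelling integral `∬ (𝓔x − 𝓔E) W₀` is positive. -/
theorem ground_state_is_tunnelling
    (m ω hbar : ℝ) (hm : 0 < m) (hω : 0 < ω) (hhbar : 0 < hbar)
    (W₀ : ℝ × ℝ → ℝ)
    (hW₀ : ∀ z : ℝ × ℝ, W₀ z = 1 / (Real.pi * hbar) *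
        Real.exp (-(m * ω * z.1 ^ 2) / hbar) * Real.exp (-(z.2 ^ 2) / (m * ω * hbar)))
    (Ex EE : ℝ × ℝ → ℝ)
    (hEx : ∀ z : ℝ × ℝ,
        Ex z = if |z.1| > Real.sqrt (hbar / (m * ω)) then 1 else 0)
    (hEE : ∀ z : ℝ × ℝ, EE z = 1 - 2 * Real.pi * hbar * W₀ z) :
    (∫ z : ℝ × ℝ, (Ex z - EE z) * W₀ z) > 0 := by
  have hπ := Real.pi_pos
  set a : ℝ := m * ω / hbar with ha_def
  set b : ℝ := 1 / (m * ω * hbar) with hb_def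
  set C : ℝ := 1 / (Real.pi * hbar) with hC_def
  have ha : 0 < a := by positivity
  have hb : 0 < b := by positivity
  have hC : 0 < C := by positivity
  set r : ℝ := Real.sqrt (hbar / (m * ω)) with hr_def
  set S : Set ℝ := {x | r < |x|} with hS_def
  have hSmeas : MeasurableSet S := by
    have : S = (fun x : ℝ => |x|) ⁻¹' Set.Ioi r := rfl
    rw [this]
    exact measurable_abs measurableSet_Ioi
  set g1 : ℝ → ℝ := fun x => Real.exp (-a * x ^ 2) with hg1
  set g2 : ℝ → ℝ := fun p => Real.exp (-b * p ^ 2) with hg2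
  set h1 : ℝ → ℝ := fun x => Real.exp (-(2 * a) * x ^ 2) with hh1
  set h2 : ℝ → ℝ := fun p => Real.exp (-(2 * b) * p ^ 2) with hh2
  set f1 : ℝ → ℝ := S.indicator g1 with hf1
  -- pointwise forms
  have hW' : ∀ z : ℝ × ℝ, W₀ z = C * (g1 z.1 * g2 z.2) := by
    intro z
    rw [hW₀ z, show -(m * ω * z.1 ^ 2) / hbar = -a * z.1 ^ 2 by rw [ha_def]; ring,
      show -(z.2 ^ 2) / (m * ω * hbar) = -b * z.2 ^ 2 by rw [hb_def]; field_simp]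
    ring
  have hW2 : ∀ z : ℝ × ℝ, W₀ z * W₀ z = C ^ 2 * (h1 z.1 * h2 z.2) := by
    intro z
    rw [hW' z, hg1, hg2, hh1, hh2]
    simp only
    rw [show -(2 * a) * z.1 ^ 2 = -a * z.1 ^ 2 + -a * z.1 ^ 2 by ring,
      show -(2 * b) * z.2 ^ 2 = -b * z.2 ^ 2 + -b * z.2 ^ 2 by ring,
      Real.exp_add, Real.exp_add]
    ring
  have hExW : ∀ z : ℝ × ℝ, Ex z * W₀ z = C * (f1 z.1 * g2 z.2) := by
    intro z
    rw [hEx z, hW' z, hf1]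
    by_cases h : r < |z.1|
    · rw [Set.indicator_of_mem (by exact h) g1]
      simp [h]
    · rw [Set.indicator_of_notMem (by exact h) g1]
      simp [h]
  -- integrabilities
  have hi_g1 : Integrable g1 := integrable_exp_neg_mul_sq ha
  have hi_g2 : Integrable g2 := integrable_exp_neg_mul_sq hb
  have hi_h1 : Integrable h1 := integrable_exp_neg_mul_sq (by positivity)
  have hi_h2 : Integrable h2 := integrable_exp_neg_mul_sq (by positivity)
  have hi_f1 : Integrable f1 := hi_g1.indicator hSmeas
  have hiW : Integrable W₀ := by
    have := tunnel_prod_integrable hi_g1 hi_g2 C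
    exact this.congr (by filter_upwards with z using (hW' z).symm)
  have hiW2 : Integrable (fun z : ℝ × ℝ => 2 * Real.pi * hbar * (W₀ z * W₀ z)) := by
    have := (tunnel_prod_integrable hi_h1 hi_h2 (C ^ 2)).const_mul (2 * Real.pi * hbar)
    exact this.congr (by filter_upwards with z using by rw [hW2 z])
  have hiExW : Integrable (fun z : ℝ × ℝ => Ex z * W₀ z) := by
    have := tunnel_prod_integrable hi_f1 hi_g2 C
    exact this.congr (by filter_upwards with z using (hExW z).symm)
  -- split the integral
  have hsplit : (∫ z : ℝ × ℝ, (Ex z - EE z) * W₀ z)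
      = (∫ z : ℝ × ℝ, Ex z * W₀ z)
        + ((∫ z : ℝ × ℝ, 2 * Real.pi * hbar * (W₀ z * W₀ z)) - ∫ z : ℝ × ℝ, W₀ z) := by
    have heq : (fun z : ℝ × ℝ => (Ex z - EE z) * W₀ z)
        = fun z : ℝ × ℝ => Ex z * W₀ z + (2 * Real.pi * hbar * (W₀ z * W₀ z) - W₀ z) :=
      funext fun z => by rw [hEE z]; ring
    have hsub : Integrable (fun z : ℝ × ℝ => 2 * Real.pi * hbar * (W₀ z * W₀ z) - W₀ z) :=
      hiW2.sub hiW
    rw [heq, integral_add hiExW hsub, integral_sub hiW2 hiW]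
  -- the two Gaussian normalisation terms cancel
  have hval2 : (∫ z : ℝ × ℝ, 2 * Real.pi * hbar * (W₀ z * W₀ z))
      = 2 * Real.pi * hbar * (C ^ 2 * ((Real.sqrt (Real.pi / (2 * a))) * Real.sqrt (Real.pi / (2 * b)))) := by
    rw [show (fun z : ℝ × ℝ => 2 * Real.pi * hbar * (W₀ z * W₀ z))
        = fun z : ℝ × ℝ => 2 * Real.pi * hbar * (C ^ 2 * (h1 z.1 * h2 z.2)) from
      funext fun z => by rw [hW2 z]]
    rw [MeasureTheory.integral_const_mul, tunnel_prod_integral h1 h2 (C ^ 2), hh1, hh2,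
      integral_gaussian, integral_gaussian]
  have hvalW : (∫ z : ℝ × ℝ, W₀ z) = C * (Real.sqrt (Real.pi / a) * Real.sqrt (Real.pi / b)) := by
    rw [show W₀ = fun z : ℝ × ℝ => C * (g1 z.1 * g2 z.2) from funext hW']
    rw [tunnel_prod_integral g1 g2 C, hg1, hg2, integral_gaussian, integral_gaussian]
  have hcancel : (∫ z : ℝ × ℝ, 2 * Real.pi * hbar * (W₀ z * W₀ z)) - (∫ z : ℝ × ℝ, W₀ z) = 0 := by
    rw [hval2, hvalW,
      show Real.pi / (2 * a) = (Real.pi / a) / 2 by ring,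
      show Real.pi / (2 * b) = (Real.pi / b) / 2 by ring,
      Real.sqrt_div (by positivity : (0:ℝ) ≤ Real.pi / a),
      Real.sqrt_div (by positivity : (0:ℝ) ≤ Real.pi / b)]
    have h2' : Real.sqrt 2 * Real.sqrt 2 = 2 := Real.mul_self_sqrt (by norm_num)
    have hC1 : Real.pi * hbar * C = 1 := by rw [hC_def]; field_simp
    have hhalf : (Real.sqrt (Real.pi / a) / Real.sqrt 2) * (Real.sqrt (Real.pi / b) / Real.sqrt 2)
        = (Real.sqrt (Real.pi / a) * Real.sqrt (Real.pi / b)) / 2 := by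
      rw [div_mul_div_comm, h2']
    rw [hhalf]
    linear_combination (C * (Real.sqrt (Real.pi / a) * Real.sqrt (Real.pi / b))) * hC1
  -- positivity of the forbidden-region term
  have hvalEx : (∫ z : ℝ × ℝ, Ex z * W₀ z) = C * ((∫ x, f1 x) * Real.sqrt (Real.pi / b)) := by
    rw [show (fun z : ℝ × ℝ => Ex z * W₀ z) = fun z : ℝ × ℝ => C * (f1 z.1 * g2 z.2) from
      funext hExW]
    rw [tunnel_prod_integral f1 g2 C, hg2, integral_gaussian]
  have hf1pos : 0 < ∫ x, f1 x := by
    rw [hf1, integral_indicator hSmeas]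
    rw [setIntegral_pos_iff_support_of_nonneg_ae
      (by filter_upwards with x using le_of_lt (Real.exp_pos _))
      (hi_g1.integrableOn)]
    have hsupp : Function.support g1 = Set.univ := by
      ext x
      simp [hg1, Real.exp_ne_zero]
    rw [hsupp, Set.univ_inter]
    have hsub : Set.Ioi r ⊆ S := by
      intro x hx
      have : r < x := hx
      have hr0 : 0 ≤ r := Real.sqrt_nonneg _
      simp only [hS_def, Set.mem_setOf_eq]
      rw [abs_of_nonneg (le_trans hr0 (le_of_lt this))]
      exact this
    calc (0 : ENNReal) < volume (Set.Ioi r) := by simp [Real.volume_Ioi]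
      _ ≤ volume S := measure_mono hsub
  have hExpos : 0 < ∫ z : ℝ × ℝ, Ex z * W₀ z := by
    rw [hvalEx]
    have : 0 < Real.sqrt (Real.pi / b) := Real.sqrt_pos.mpr (by positivity)
    positivity
  rw [hsplit, hcancel, add_zero]
  exact hExpos
end
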